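/- Let P = [d] be the totally ordered set on d elements and φ ∈ Hom([d],[n]). Consider subsets D ⊆ T_*(φ) \ Γφ. Then: (1) D is uniquely determined by its projection p₂(D) onto [n], i.e., if D, D' ⊆ T_*(φ) \ Γφ have the same projection onto [n] then D = D'; (2) the subsets of [n] occurring as p₂(D) for some D ⊆ T_*(φ) \ Γφ are exactly the subsets of {1, …, φ(d)−1}. -/

import Mathlib

variable {P : Type*} [PartialOrder P] [Fintype P]

/-- `T_*(φ) = {(p,i) | φ q ≤ i ≤ φ p for all q < p}`. -/
def Tstar {n : ℕ} (φ : P → Fin n) : Set (P × Fin n) :=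
  {x | x.2 ≤ φ x.1 ∧ ∀ q : P, q < x.1 → φ q ≤ x.2}

/-- The graph `Γφ = {(p, φ p) | p ∈ P}` of a map φ : P → [n]. -/
def graphOf {n : ℕ} (φ : P → Fin n) : Set (P × Fin n) :=
  {x | x.2 = φ x.1}

/-!
A point `(p, j)` of `T_*(φ) \ Γφ` satisfies `φ q ≤ j < φ p` for all `q < p`, so in a chain `p` is
the least element with `j < φ p`: it is determined by `j`. Hence `p₂` is injective on
`T_*(φ) \ Γφ`, and every `j` below some value `φ p` is hit by the least such `p`; for isotone `φ`
on `[d]` these are the `j < φ(d)`.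
-/

section

variable {α : Type*} {n : ℕ} (φ : α → Fin n)

lemma snd_lt_of_mem_Tstar_diff_graphOf [PartialOrder α] {x : α × Fin n}
    (hx : x ∈ Tstar φ \ graphOf φ) : x.2 < φ x.1 :=
  lt_of_le_of_ne hx.1.1 hx.2

lemma injOn_snd_Tstar_diff_graphOf [LinearOrder α] :
    Set.InjOn Prod.snd (Tstar φ \ graphOf φ) := by
  have fst_le : ∀ {p p' : α} {j : Fin n}, (p, j) ∈ Tstar φ \ graphOf φ →
      (p', j) ∈ Tstar φ \ graphOf φ → p ≤ p' := fun hp hp' =>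
    not_lt.1 fun hlt => (snd_lt_of_mem_Tstar_diff_graphOf φ hp').not_ge (hp.1.2 _ hlt)
  rintro ⟨p, j⟩ hp ⟨p', j'⟩ hp' (rfl : j = j')
  rw [le_antisymm (fst_le hp hp') (fst_le hp' hp)]

lemma snd_image_Tstar_diff_graphOf [PartialOrder α] [WellFoundedLT α] :
    Prod.snd '' (Tstar φ \ graphOf φ) = {j | ∃ p, j < φ p} := by
  ext j
  constructor
  · rintro ⟨x, hx, rfl⟩
    exact ⟨x.1, snd_lt_of_mem_Tstar_diff_graphOf φ hx⟩
  · intro hj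
    obtain ⟨p, hp⟩ := exists_minimal_of_wellFoundedLT (fun p => j < φ p) hj
    exact ⟨(p, j), ⟨⟨hp.prop.le, fun q hq => not_lt.1 (hp.not_prop_of_lt hq)⟩, hp.prop.ne⟩, rfl⟩

lemma snd_image_Tstar_diff_graphOf_eq_Iio [PartialOrder α] [WellFoundedLT α] {top : α}
    (htop : ∀ p, p ≤ top) (hφ : Monotone φ) :
    Prod.snd '' (Tstar φ \ graphOf φ) = Set.Iio (φ top) := by
  rw [snd_image_Tstar_diff_graphOf]
  exact Set.ext fun j => ⟨fun ⟨p, hp⟩ => hp.trans_le (hφ (htop p)), fun hj => ⟨top, hj⟩⟩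

end

/-- Let P = [d] be totally ordered and φ : [d] → [n] isotone.  For subsets
D ⊆ T_*(φ) \ Γφ:  (1) D is uniquely determined by its projection p₂(D) onto [n];
(2) the sets occurring as p₂(D) are exactly the subsets of {1, …, φ(d) − 1}. -/
theorem stmt9 {d n : ℕ} (hd : 0 < d) (φ : Fin d → Fin n) (hφ : Monotone φ) :
    (∀ D D' : Set (Fin d × Fin n), D ⊆ Tstar φ \ graphOf φ → D' ⊆ Tstar φ \ graphOf φ →
      Prod.snd '' D = Prod.snd '' D' → D = D') ∧
      (∀ E : Set (Fin n),
        (∃ D : Set (Fin d × Fin n), D ⊆ Tstar φ \ graphOf φ ∧ Prod.snd '' D = E) ↔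
          ∀ j ∈ E, j < φ ⟨d - 1, by omega⟩) := by
  have hlast : ∀ p : Fin d, p ≤ ⟨d - 1, by omega⟩ := fun p =>
    Fin.le_def.2 (Nat.le_sub_one_of_lt p.isLt)
  refine ⟨fun D D' hD hD' => ((injOn_snd_Tstar_diff_graphOf φ).image_eq_image_iff hD hD').1,
    fun E => ?_⟩
  rw [← Set.subset_image_iff, snd_image_Tstar_diff_graphOf_eq_Iio φ hlast hφ]
  rfl
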